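/- Fix α > 1 and a probability measure μ with measurable τ : X → ℝ, τ ∈ L^α(μ). If both μ({τ > 0}) > 0 and μ({τ < 0}) > 0, then the minimizer δ* ∈ [0,1] of L(δ) = ∫ (τ(x)(1{τ(x)≥0} − δ))^α dμ(x) satisfies δ* ∈ (0,1), i.e., the optimal rule is strictly fractional. Conversely, if μ({τ < 0}) = 0 then δ* = 1 is optimal, and if μ({τ > 0}) = 0 then δ* = 0 is optimal. -/

import Mathlib

open MeasureTheory

private noncomputable def gfun {X : Type*} (τ : X → ℝ) (α : ℝ) (x : X) : ℝ :=
  if 0 ≤ τ x then τ x ^ α else 0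

private noncomputable def hfun {X : Type*} (τ : X → ℝ) (α : ℝ) (x : X) : ℝ :=
  if 0 ≤ τ x then 0 else (-τ x) ^ α

private lemma aux_improve {α A B : ℝ} (hα : 1 < α) (hA : 0 < A) (hB : 0 < B) :
    ∃ δ : ℝ, 0 < δ ∧ δ < 1 ∧ (1 - δ) ^ α * A + δ ^ α * B < A := by
  have hαpos : (0:ℝ) < α - 1 := by linarith
  have hq : (0:ℝ) < A / (2 * B) := by positivity
  set c : ℝ := min (1/2) ((A / (2 * B)) ^ (1 / (α - 1))) with hcdef
  have hc0 : 0 < c := lt_min (by norm_num) (Real.rpow_pos_of_pos hq _)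
  have hc1 : c ≤ 1/2 := min_le_left _ _
  refine ⟨c, hc0, by linarith, ?_⟩
  have h1 : (1 - c) ^ α ≤ 1 - c := by
    have h1c0 : (0:ℝ) ≤ 1 - c := by linarith
    have h1c1 : (1:ℝ) - c ≤ 1 := by linarith
    rcases eq_or_lt_of_le h1c0 with h | h
    · rw [← h, Real.zero_rpow (by linarith : α ≠ 0)]
    · calc (1 - c) ^ α ≤ (1 - c) ^ (1:ℝ) :=
            Real.rpow_le_rpow_of_exponent_ge h h1c1 (le_of_lt hα)
        _ = 1 - c := Real.rpow_one _
  have h2 : c ^ (α - 1) ≤ A / (2 * B) := by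
    calc c ^ (α - 1) ≤ ((A / (2 * B)) ^ (1 / (α - 1))) ^ (α - 1) :=
          Real.rpow_le_rpow (le_of_lt hc0) (min_le_right _ _) (le_of_lt hαpos)
      _ = A / (2 * B) := by
          rw [← Real.rpow_mul (le_of_lt hq), one_div,
            inv_mul_cancel₀ (ne_of_gt hαpos), Real.rpow_one]
  have h3 : c ^ α = c * c ^ (α - 1) := by
    have hα' : α = 1 + (α - 1) := by ring
    rw [hα', Real.rpow_add hc0, Real.rpow_one]; ring_nf
  have hcα : c ^ α * B ≤ c * (A / 2) := by
    rw [h3]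
    have h4 : c ^ (α - 1) * B ≤ A / (2 * B) * B :=
      mul_le_mul_of_nonneg_right h2 hB.le
    have h5 : A / (2 * B) * B = A / 2 := by field_simp
    have h6 : c * (c ^ (α - 1) * B) ≤ c * (A / 2) := by
      apply mul_le_mul_of_nonneg_left _ hc0.le
      rw [← h5]; exact h4
    linarith [h6]
  have h7 : (1 - c) ^ α * A ≤ (1 - c) * A := mul_le_mul_of_nonneg_right h1 hA.le
  nlinarith [hc0, hA]

open MeasureTheory in
theorem stmt_5 {X : Type*} [MeasurableSpace X] (μ : Measure X) [IsProbabilityMeasure μ]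
    (τ : X → ℝ) (hτ : Measurable τ) (α : ℝ) (hα : 1 < α)
    (hInt : Integrable (fun x => |τ x| ^ α) μ)
    (L : ℝ → ℝ)
    (hL : ∀ δ, L δ = ∫ x, (τ x * ((if 0 ≤ τ x then 1 else 0) - δ)) ^ α ∂μ) :
    (0 < μ {x | 0 < τ x} → 0 < μ {x | τ x < 0} →
      ∀ δstar ∈ Set.Icc (0:ℝ) 1, (∀ δ ∈ Set.Icc (0:ℝ) 1, L δstar ≤ L δ) →
        δstar ∈ Set.Ioo (0:ℝ) 1) ∧
    (μ {x | τ x < 0} = 0 → ∀ δ ∈ Set.Icc (0:ℝ) 1, L 1 ≤ L δ) ∧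
    (μ {x | 0 < τ x} = 0 → ∀ δ ∈ Set.Icc (0:ℝ) 1, L 0 ≤ L δ) := by
  have hα0 : (0:ℝ) < α := by linarith
  -- measurability
  have hgm : Measurable (gfun τ α) := by
    unfold gfun
    exact Measurable.ite (measurableSet_le measurable_const hτ)
      (hτ.pow_const α) measurable_const
  have hhm : Measurable (hfun τ α) := by
    unfold hfun
    exact Measurable.ite (measurableSet_le measurable_const hτ)
      measurable_const ((hτ.neg).pow_const α)
  -- integrability
  have hg_int : Integrable (gfun τ α) μ := by
    refine hInt.mono hgm.aestronglyMeasurable (ae_of_all _ fun x => ?_)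
    rw [Real.norm_eq_abs, Real.norm_eq_abs,
      abs_of_nonneg (Real.rpow_nonneg (abs_nonneg _) α)]
    unfold gfun
    split_ifs with hx
    · rw [abs_of_nonneg (Real.rpow_nonneg hx α), abs_of_nonneg hx]
    · simpa using Real.rpow_nonneg (abs_nonneg (τ x)) α
  have hh_int : Integrable (hfun τ α) μ := by
    refine hInt.mono hhm.aestronglyMeasurable (ae_of_all _ fun x => ?_)
    rw [Real.norm_eq_abs, Real.norm_eq_abs,
      abs_of_nonneg (Real.rpow_nonneg (abs_nonneg _) α)]
    unfold hfun
    split_ifs with hx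
    · simpa using Real.rpow_nonneg (abs_nonneg (τ x)) α
    · rw [abs_of_nonneg (Real.rpow_nonneg (by linarith [not_le.mp hx]) α),
        abs_of_neg (not_le.mp hx)]
  set A : ℝ := ∫ x, gfun τ α x ∂μ with hAdef
  set B : ℝ := ∫ x, hfun τ α x ∂μ with hBdef
  have hg_nonneg : ∀ x, 0 ≤ gfun τ α x := by
    intro x; unfold gfun; split_ifs with hx
    · exact Real.rpow_nonneg hx α
    · exact le_refl 0
  have hh_nonneg : ∀ x, 0 ≤ hfun τ α x := by
    intro x; unfold hfun; split_ifs with hx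
    · exact le_refl 0
    · exact Real.rpow_nonneg (by linarith [not_le.mp hx]) α
  have hA0 : 0 ≤ A := integral_nonneg hg_nonneg
  have hB0 : 0 ≤ B := integral_nonneg hh_nonneg
  -- representation of L on [0,1]
  have hLrep : ∀ δ : ℝ, 0 ≤ δ → δ ≤ 1 →
      L δ = (1 - δ) ^ α * A + δ ^ α * B := by
    intro δ h0 h1
    rw [hL δ]
    have hpt : ∀ x, (τ x * ((if 0 ≤ τ x then 1 else 0) - δ)) ^ α
        = (1 - δ) ^ α * gfun τ α x + δ ^ α * hfun τ α x := by
      intro x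
      unfold gfun hfun
      by_cases hx : 0 ≤ τ x
      · rw [if_pos hx, if_pos hx, if_pos hx,
          Real.mul_rpow hx (by linarith : (0:ℝ) ≤ 1 - δ)]
        ring
      · have hx' : τ x < 0 := not_le.mp hx
        rw [if_neg hx, if_neg hx, if_neg hx]
        have hbase : τ x * (0 - δ) = (-τ x) * δ := by ring
        rw [hbase, Real.mul_rpow (by linarith : (0:ℝ) ≤ -τ x) h0]
        ring
    simp only [hpt]
    rw [integral_add (hg_int.const_mul _) (hh_int.const_mul _),
      integral_const_mul, integral_const_mul]
  -- supports
  have hsuppg : Function.support (gfun τ α) = {x | 0 < τ x} := by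
    ext x
    simp only [Function.mem_support, Set.mem_setOf_eq]
    unfold gfun
    by_cases hx : 0 ≤ τ x
    · rcases eq_or_lt_of_le hx with h | h
      · simp [if_pos hx, ← h, Real.zero_rpow (ne_of_gt hα0)]
      · simp [if_pos hx, ne_of_gt (Real.rpow_pos_of_pos h α), h]
    · have : ¬ 0 < τ x := fun h' => hx h'.le
      simp [if_neg hx, this]
  have hsupph : Function.support (hfun τ α) = {x | τ x < 0} := by
    ext x
    simp only [Function.mem_support, Set.mem_setOf_eq]
    unfold hfun
    by_cases hx : 0 ≤ τ x
    · simp [if_pos hx, not_lt.mpr hx]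
    · have hx' : τ x < 0 := not_le.mp hx
      simp [if_neg hx, ne_of_gt (Real.rpow_pos_of_pos (by linarith : 0 < -τ x) α), hx']
  refine ⟨?_, ?_, ?_⟩
  · -- fractionality
    intro hpos hneg δstar hδs hmin
    have hA : 0 < A := by
      rw [hAdef]
      exact (integral_pos_iff_support_of_nonneg hg_nonneg hg_int).mpr
        (by rw [hsuppg]; exact hpos)
    have hB : 0 < B := by
      rw [hBdef]
      exact (integral_pos_iff_support_of_nonneg hh_nonneg hh_int).mpr
        (by rw [hsupph]; exact hneg)
    constructor
    · rcases hδs.1.lt_or_eq with h | h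
      · exact h
      · exfalso
        obtain ⟨c, hc0, hc1, hlt⟩ := aux_improve hα hA hB
        have hLc : L c = (1 - c) ^ α * A + c ^ α * B := hLrep c hc0.le hc1.le
        have hL0 : L 0 = A := by
          rw [hLrep 0 le_rfl zero_le_one, Real.zero_rpow (ne_of_gt hα0)]
          simp
        have := hmin c ⟨hc0.le, hc1.le⟩
        rw [← h, hL0, hLc] at this
        linarith
    · rcases hδs.2.lt_or_eq with h | h
      · exact h
      · exfalso
        obtain ⟨c, hc0, hc1, hlt⟩ := aux_improve hα hB hA
        have hLc : L (1 - c) = c ^ α * A + (1 - c) ^ α * B := by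
          rw [hLrep (1 - c) (by linarith) (by linarith)]
          ring_nf
        have hL1 : L 1 = B := by
          rw [hLrep 1 zero_le_one le_rfl]
          simp [Real.zero_rpow (ne_of_gt hα0)]
        have := hmin (1 - c) ⟨by linarith, by linarith⟩
        rw [h, hL1, hLc] at this
        linarith
  · -- μ {τ < 0} = 0 → δ = 1 optimal
    intro hzero δ hδ
    have hBz : B = 0 := by
      rw [hBdef]
      apply integral_eq_zero_of_ae
      rw [Filter.EventuallyEq, ae_iff]
      have hs : {x | ¬ hfun τ α x = (0:ℝ)} = {x | τ x < 0} := by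
        rw [← hsupph]; rfl
      simpa [hs] using hzero
    have hL1 : L 1 = 0 := by
      rw [hLrep 1 zero_le_one le_rfl, hBz]
      simp [Real.zero_rpow (ne_of_gt hα0)]
    rw [hL1, hLrep δ hδ.1 hδ.2, hBz]
    have := mul_nonneg (Real.rpow_nonneg (by linarith [hδ.2] : (0:ℝ) ≤ 1 - δ) α) hA0
    nlinarith [Real.rpow_nonneg hδ.1 α]
  · -- μ {0 < τ} = 0 → δ = 0 optimal
    intro hzero δ hδ
    have hAz : A = 0 := by
      rw [hAdef]
      apply integral_eq_zero_of_ae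
      rw [Filter.EventuallyEq, ae_iff]
      have hs : {x | ¬ gfun τ α x = (0:ℝ)} = {x | 0 < τ x} := by
        rw [← hsuppg]; rfl
      simpa [hs] using hzero
    have hL0 : L 0 = 0 := by
      rw [hLrep 0 le_rfl zero_le_one, hAz]
      simp [Real.zero_rpow (ne_of_gt hα0)]
    rw [hL0, hLrep δ hδ.1 hδ.2, hAz]
    have := mul_nonneg (Real.rpow_nonneg hδ.1 α) hB0
    nlinarith [Real.rpow_nonneg (by linarith [hδ.2] : (0:ℝ) ≤ 1 - δ) α]
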